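/- Let $(\delta_k)_{k\geq0}$ be nonnegative reals with $[\delta]_{1+\rho} < \infty$ for some $\rho > 0$, $K \in (1,2]$, and let $(\varepsilon_j)$ be a decreasing positive sequence with $\varepsilon_0 = 1$ satisfying $\varepsilon_\ell/\varepsilon_k \leq K(1-K^{-1})^{\ell-k}$ for $\ell \geq k$ and $\sum_{j=0}^k \varepsilon_k/\varepsilon_j \leq 3$ for all $k$. Define $M_m = \max\big\{\sum_{j=0}^{m}\frac{\varepsilon_m}{\varepsilon_j}\sum_{k=j}^{\infty}\delta_k,\ \sum_{j=0}^m\frac{\varepsilon_m}{\varepsilon_j}\sum_{k=1}^\infty k^{\rho/2}\delta_{k+m}\big\}$. Then $\sum_{\ell=m}^{\infty} M_\ell \leq 27([\delta]_0+[\delta]_1)\max\{m^{-1},(1-K^{-1})^{m-1}\} + 6 m^{-\rho/2}[\delta]_{1+\rho}$ for all $m \geq 1$; in particular $\sum_{\ell=m}^\infty M_\ell \to 0$ as $m \to \infty$, so for every $T > 0$ there exists $m_0$ with $T\sum_{\ell=m_0}^\infty M_\ell \leq 1$. -/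

import Mathlib

/-!
Write `T_j = ∑_{k ≥ j} δ_k` and `q = 1 - K⁻¹ ≤ 1/2`. The partial-sum bound gives
`M_ℓ ≤ ∑_{j ≤ ℓ} (ε_ℓ/ε_j) T_j + 3 S_ℓ` with `S_ℓ = ∑_k (k+1)^{ρ/2} δ_{k+1+ℓ}`.
Exchanging the order of summation in `∑_{ℓ ≥ m}`, each `T_j` with `j < m` gets the weight
`∑_ℓ ε_{m+ℓ}/ε_j ≤ K² q^{m-j} ≤ 4 q^{m-j}`, and each `T_j` with `j ≥ m` a weight `≤ 1 + K(K-1) ≤ 3`.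
For `j < m`, `m T_j ≤ j T_j + (m-j) T_j ≤ [δ]_1 + (m-j)[δ]_0`, and `∑ q^d, ∑ d q^d ≤ 2`,
so the first part is at most `8([δ]_0 + [δ]_1)/m`. The second part and `3 ∑_{ℓ≥m} S_ℓ` are sums
`∑_n w_n δ_{b+n}` with `b ≥ m` and `w_n ≤ (n+1)^{1+ρ/2} ≤ m^{-ρ/2} (b+n)^{1+ρ}`, each at most
`3 m^{-ρ/2} [δ]_{1+ρ}`. The resulting bound tends to `0`, which yields `m₀`.
-/

open scoped ENNReal
open Finset Filter Topology

theorem ENNReal.tsum_tsum_add_eq_tsum_sum_range (g : ℕ → ℕ → ℝ≥0∞) :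
    ∑' j, ∑' i, g j (j + i) = ∑' n, ∑ j ∈ range (n + 1), g j n := by
  rw [← ENNReal.tsum_prod (f := fun j i => g j (j + i)),
    ← (HasAntidiagonal.sigmaAntidiagonalEquivProd (A := ℕ)).tsum_eq, ENNReal.tsum_sigma']
  refine tsum_congr fun n =>
    (tsum_subtype (antidiagonal n) (fun p => g p.1 (p.1 + p.2))).trans ?_
  rw [Nat.sum_antidiagonal_eq_sum_range_succ_mk]
  refine sum_congr rfl fun j hj => ?_
  rw [Nat.add_sub_cancel' (Nat.lt_succ_iff.1 (mem_range.1 hj))]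

theorem ENNReal.tsum_sum_range_add_eq (f : ℕ → ℕ → ℝ≥0∞) (m : ℕ) :
    ∑' ℓ, ∑ j ∈ range (m + ℓ + 1), f (m + ℓ) j =
      ∑ j ∈ range m, ∑' ℓ, f (m + ℓ) j + ∑' i, ∑' ℓ, f (m + i + ℓ) (m + i) := by
  have hsplit : ∀ ℓ, ∑ j ∈ range (m + ℓ + 1), f (m + ℓ) j =
      ∑ j ∈ range m, f (m + ℓ) j + ∑ i ∈ range (ℓ + 1), f (m + ℓ) (m + i) := fun ℓ => by
    rw [add_assoc, sum_range_add]
  rw [tsum_congr hsplit, ENNReal.tsum_add, Summable.tsum_finsetSum fun _ _ => ENNReal.summable,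
    ← ENNReal.tsum_tsum_add_eq_tsum_sum_range (fun i n => f (m + n) (m + i))]
  simp_rw [add_assoc]

theorem ENNReal.natCast_mul_tsum_add_le (f : ℕ → ℝ≥0∞) (j : ℕ) :
    (j : ℝ≥0∞) * ∑' k, f (j + k) ≤ ∑' n, n * f n := by
  rw [← ENNReal.tsum_mul_left]
  calc ∑' k, (j : ℝ≥0∞) * f (j + k) ≤ ∑' k, ((j + k : ℕ) : ℝ≥0∞) * f (j + k) :=
        ENNReal.tsum_le_tsum fun k => by gcongr; omega
    _ ≤ ∑' n, n * f n :=
        ENNReal.tsum_comp_le_tsum_of_injective (add_right_injective j) (fun n => (n : ℝ≥0∞) * f n)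

theorem ENNReal.sum_range_sub_le_tsum (g : ℕ → ℝ≥0∞) (m : ℕ) :
    ∑ j ∈ range m, g (m - j) ≤ ∑' d, g d := by
  rw [← sum_image (g := (m - ·)) fun i hi j hj h => by simp at hi hj; dsimp at h; omega]
  exact ENNReal.sum_le_tsum _

theorem Real.mul_rpow_le_rpow_neg_mul_rpow {u m x ρ : ℝ} (hρ : 0 ≤ ρ) (hu : 0 ≤ u)
    (hux : u ≤ x) (hm : 0 < m) (hmx : m ≤ x) :
    u * u ^ (ρ / 2) ≤ m ^ (-(ρ / 2)) * x ^ (1 + ρ) := by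
  have hx : 0 < x := hm.trans_le hmx
  have hsplit : m ^ (-(ρ / 2)) * x ^ (1 + ρ) = x * x ^ (ρ / 2) * (x / m) ^ (ρ / 2) := by
    rw [Real.div_rpow hx.le hm.le, Real.rpow_neg hm.le,
      show 1 + ρ = 1 + ρ / 2 + ρ / 2 by ring, Real.rpow_add hx, Real.rpow_add hx, Real.rpow_one]
    field_simp
  have hratio : 1 ≤ (x / m) ^ (ρ / 2) :=
    Real.one_le_rpow ((one_le_div hm).2 hmx) (by positivity)
  rw [hsplit]
  calc u * u ^ (ρ / 2) ≤ x * x ^ (ρ / 2) := by gcongr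
    _ ≤ x * x ^ (ρ / 2) * (x / m) ^ (ρ / 2) := le_mul_of_one_le_right (by positivity) hratio

theorem ENNReal.tsum_mul_add_le_rpow_neg_mul (f : ℕ → ℝ≥0∞) {ρ : ℝ} (hρ : 0 ≤ ρ) {m b : ℕ}
    (hm : 0 < m) (hmb : m ≤ b) {w : ℕ → ℝ≥0∞}
    (hw : ∀ n, w n ≤ ((n + 1 : ℕ) : ℝ≥0∞) * ((n + 1 : ℕ) : ℝ≥0∞) ^ (ρ / 2)) :
    ∑' n, w n * f (b + n) ≤
      ENNReal.ofReal ((m : ℝ) ^ (-(ρ / 2))) * ∑' k : ℕ, (k : ℝ≥0∞) ^ (1 + ρ) * f k := by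
  set c := ENNReal.ofReal ((m : ℝ) ^ (-(ρ / 2)))
  have hcoef : ∀ n, w n ≤ c * ((b + n : ℕ) : ℝ≥0∞) ^ (1 + ρ) := by
    intro n
    refine (hw n).trans ?_
    simp only [c, ← ENNReal.ofReal_natCast]
    rw [ENNReal.ofReal_rpow_of_nonneg (Nat.cast_nonneg _) (by positivity),
      ENNReal.ofReal_rpow_of_nonneg (Nat.cast_nonneg _) (by positivity),
      ← ENNReal.ofReal_mul (Nat.cast_nonneg _), ← ENNReal.ofReal_mul (by positivity)]
    exact ENNReal.ofReal_le_ofReal <| Real.mul_rpow_le_rpow_neg_mul_rpow hρ (Nat.cast_nonneg _)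
      (Nat.cast_le.2 (by omega)) (Nat.cast_pos.2 hm) (Nat.cast_le.2 (by omega))
  calc ∑' n, w n * f (b + n)
      ≤ ∑' n, c * (((b + n : ℕ) : ℝ≥0∞) ^ (1 + ρ) * f (b + n)) :=
        ENNReal.tsum_le_tsum fun n => by rw [← mul_assoc]; gcongr; exact hcoef n
    _ = c * ∑' n, ((b + n : ℕ) : ℝ≥0∞) ^ (1 + ρ) * f (b + n) := ENNReal.tsum_mul_left
    _ ≤ _ := mul_le_mul_right (ENNReal.tsum_comp_le_tsum_of_injective (add_right_injective b)
          (fun k => (k : ℝ≥0∞) ^ (1 + ρ) * f k)) _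

theorem ENNReal.tsum_tails_add_le (f : ℕ → ℝ≥0∞) {ρ : ℝ} (hρ : 0 ≤ ρ) {m : ℕ} (hm : 0 < m) :
    ∑' i, ∑' k, f (m + i + k) ≤
      ENNReal.ofReal ((m : ℝ) ^ (-(ρ / 2))) * ∑' k : ℕ, (k : ℝ≥0∞) ^ (1 + ρ) * f k := by
  simp_rw [add_assoc m]
  rw [ENNReal.tsum_tsum_add_eq_tsum_sum_range (fun _ n => f (m + n))]
  simp only [sum_const, card_range, nsmul_eq_mul]
  refine ENNReal.tsum_mul_add_le_rpow_neg_mul f hρ hm le_rfl fun n => ?_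
  refine le_mul_of_one_le_right' ?_
  simpa using ENNReal.rpow_le_rpow_of_exponent_le (x := ((n + 1 : ℕ) : ℝ≥0∞))
    (by exact_mod_cast n.succ_pos) (by positivity : (0 : ℝ) ≤ ρ / 2)

theorem ENNReal.tsum_tsum_rpow_mul_add_le (f : ℕ → ℝ≥0∞) {ρ : ℝ} (hρ : 0 ≤ ρ) {m : ℕ}
    (hm : 0 < m) :
    ∑' ℓ, ∑' k, ((k + 1 : ℕ) : ℝ≥0∞) ^ (ρ / 2) * f (k + 1 + (m + ℓ)) ≤
      ENNReal.ofReal ((m : ℝ) ^ (-(ρ / 2))) * ∑' k : ℕ, (k : ℝ≥0∞) ^ (1 + ρ) * f k := by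
  rw [ENNReal.tsum_comm]
  simp_rw [show ∀ k ℓ, k + 1 + (m + ℓ) = m + 1 + (k + ℓ) by omega]
  rw [ENNReal.tsum_tsum_add_eq_tsum_sum_range
    (fun k n => ((k + 1 : ℕ) : ℝ≥0∞) ^ (ρ / 2) * f (m + 1 + n))]
  simp only [← sum_mul]
  refine ENNReal.tsum_mul_add_le_rpow_neg_mul f hρ hm m.le_succ fun n => ?_
  calc ∑ k ∈ range (n + 1), ((k + 1 : ℕ) : ℝ≥0∞) ^ (ρ / 2)
      ≤ ∑ k ∈ range (n + 1), ((n + 1 : ℕ) : ℝ≥0∞) ^ (ρ / 2) := by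
        gcongr with k hk
        exact Nat.lt_succ_iff.1 (mem_range.1 hk)
    _ = _ := by rw [sum_const, card_range, nsmul_eq_mul]

theorem ENNReal.tsum_ofReal_mul_pow {C q : ℝ} (hC : 0 ≤ C) (hq0 : 0 ≤ q) (hq1 : q < 1) :
    ∑' n : ℕ, ENNReal.ofReal (C * q ^ n) = ENNReal.ofReal (C * (1 - q)⁻¹) := by
  rw [← ENNReal.ofReal_tsum_of_nonneg (fun n => by positivity)
    ((summable_geometric_of_lt_one hq0 hq1).mul_left C), tsum_mul_left,
    tsum_geometric_of_lt_one hq0 hq1]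

theorem ENNReal.tsum_natCast_mul_ofReal_pow {q : ℝ} (hq0 : 0 ≤ q) (hq1 : q < 1) :
    ∑' n : ℕ, (n : ℝ≥0∞) * ENNReal.ofReal (q ^ n) = ENNReal.ofReal (q / (1 - q) ^ 2) := by
  have hnorm : ‖q‖ < 1 := by rwa [Real.norm_of_nonneg hq0]
  simp only [← ENNReal.ofReal_natCast, ← ENNReal.ofReal_mul (Nat.cast_nonneg _)]
  rw [← ENNReal.ofReal_tsum_of_nonneg (fun n => by positivity)
    (summable_pow_mul_geometric_of_norm_lt_one 1 hnorm |>.congr fun n => by simp),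
    tsum_coe_mul_geometric_of_norm_lt_one hnorm]

theorem ENNReal.sum_ofReal_pow_sub_mul_tsum_add_le (f : ℕ → ℝ≥0∞) {q : ℝ} (hq0 : 0 ≤ q)
    (hq : q ≤ 1 / 2) {m : ℕ} (hm : 0 < m) :
    ∑ j ∈ range m, ENNReal.ofReal (q ^ (m - j)) * ∑' k, f (j + k) ≤
      ENNReal.ofReal (2 / m) * (∑' k, f k + ∑' k, k * f k) := by
  have hq1 : q < 1 := by linarith
  set c : ℕ → ℝ≥0∞ := fun d => ENNReal.ofReal (q ^ d)
  have hc : ∑ j ∈ range m, c (m - j) ≤ 2 := by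
    refine (ENNReal.sum_range_sub_le_tsum c m).trans ?_
    have := ENNReal.tsum_ofReal_mul_pow zero_le_one hq0 hq1
    simp only [one_mul] at this
    rw [this, ← ENNReal.ofReal_ofNat]
    exact ENNReal.ofReal_le_ofReal (inv_le_of_inv_le₀ (by norm_num) (by linarith))
  have hdc : ∑ j ∈ range m, ((m - j : ℕ) : ℝ≥0∞) * c (m - j) ≤ 2 := by
    refine (ENNReal.sum_range_sub_le_tsum (fun d => (d : ℝ≥0∞) * c d) m).trans ?_
    rw [ENNReal.tsum_natCast_mul_ofReal_pow hq0 hq1, ← ENNReal.ofReal_ofNat]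
    refine ENNReal.ofReal_le_ofReal ((div_le_iff₀ (by nlinarith)).2 (by nlinarith))
  have hterm : ∀ j ∈ range m, (m : ℝ≥0∞) * (c (m - j) * ∑' k, f (j + k)) ≤
      c (m - j) * ∑' k, k * f k + ((m - j : ℕ) : ℝ≥0∞) * c (m - j) * ∑' k, f k := by
    intro j hj
    have hm : (m : ℝ≥0∞) = j + (m - j : ℕ) := by
      rw [← Nat.cast_add, Nat.add_sub_cancel' (mem_range.1 hj).le]
    calc (m : ℝ≥0∞) * (c (m - j) * ∑' k, f (j + k))
        = c (m - j) * ((j : ℝ≥0∞) * ∑' k, f (j + k)) +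
            ((m - j : ℕ) : ℝ≥0∞) * c (m - j) * ∑' k, f (j + k) := by rw [hm]; ring
      _ ≤ _ := add_le_add (mul_le_mul_right (ENNReal.natCast_mul_tsum_add_le f j) _)
          (mul_le_mul_right (ENNReal.tsum_comp_le_tsum_of_injective (add_right_injective j) f) _)
  rw [ENNReal.ofReal_div_of_pos (by exact_mod_cast hm), ENNReal.ofReal_ofNat,
    ENNReal.ofReal_natCast, ← ENNReal.mul_div_right_comm,
    ENNReal.le_div_iff_mul_le (by simp [hm.ne']) (by simp), mul_comm]
  calc (m : ℝ≥0∞) * ∑ j ∈ range m, c (m - j) * ∑' k, f (j + k)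
      ≤ ∑ j ∈ range m, (c (m - j) * ∑' k, k * f k +
          ((m - j : ℕ) : ℝ≥0∞) * c (m - j) * ∑' k, f k) := by
        rw [mul_sum]; exact sum_le_sum hterm
    _ = (∑ j ∈ range m, c (m - j)) * ∑' k, k * f k +
          (∑ j ∈ range m, ((m - j : ℕ) : ℝ≥0∞) * c (m - j)) * ∑' k, f k := by
        rw [sum_add_distrib, sum_mul, sum_mul]
    _ ≤ 2 * ∑' k, k * f k + 2 * ∑' k, f k := by gcongr
    _ = 2 * (∑' k, f k + ∑' k, k * f k) := by ring

section Ratios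

variable {ε : ℕ → ℝ} {K : ℝ}

theorem tsum_ofReal_div_le_sq_mul_pow (hK : 1 < K)
    (hgeo : ∀ k ℓ : ℕ, k ≤ ℓ → ε ℓ / ε k ≤ K * (1 - K⁻¹) ^ (ℓ - k)) {j m : ℕ} (hjm : j ≤ m) :
    ∑' ℓ, ENNReal.ofReal (ε (m + ℓ) / ε j) ≤ ENNReal.ofReal (K ^ 2 * (1 - K⁻¹) ^ (m - j)) := by
  have hK0 : 0 < K := one_pos.trans hK
  have hq0 : 0 ≤ 1 - K⁻¹ := sub_nonneg.2 (inv_le_one_of_one_le₀ hK.le)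
  have hq1 : 1 - K⁻¹ < 1 := sub_lt_self _ (inv_pos.2 hK0)
  calc ∑' ℓ, ENNReal.ofReal (ε (m + ℓ) / ε j)
      ≤ ∑' ℓ, ENNReal.ofReal (K * (1 - K⁻¹) ^ (m - j) * (1 - K⁻¹) ^ ℓ) :=
        ENNReal.tsum_le_tsum fun ℓ => ENNReal.ofReal_le_ofReal <|
          (hgeo j (m + ℓ) (by omega)).trans_eq
            (by rw [show m + ℓ - j = m - j + ℓ by omega, pow_add, mul_assoc])
    _ = ENNReal.ofReal (K ^ 2 * (1 - K⁻¹) ^ (m - j)) := by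
        rw [ENNReal.tsum_ofReal_mul_pow (by positivity) hq0 hq1, sub_sub_cancel, inv_inv]
        ring_nf

theorem tsum_ofReal_div_le_four_mul_pow (hK1 : 1 < K) (hK2 : K ≤ 2)
    (hgeo : ∀ k ℓ : ℕ, k ≤ ℓ → ε ℓ / ε k ≤ K * (1 - K⁻¹) ^ (ℓ - k)) {j m : ℕ} (hjm : j ≤ m) :
    ∑' ℓ, ENNReal.ofReal (ε (m + ℓ) / ε j) ≤ ENNReal.ofReal (4 * (1 - K⁻¹) ^ (m - j)) := by
  refine (tsum_ofReal_div_le_sq_mul_pow hK1 hgeo hjm).trans (ENNReal.ofReal_le_ofReal ?_)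
  have hq0 : 0 ≤ 1 - K⁻¹ := sub_nonneg.2 (inv_le_one_of_one_le₀ hK1.le)
  gcongr
  nlinarith

theorem tsum_ofReal_div_self_le_three (hpos : ∀ j, 0 < ε j) (hK1 : 1 < K) (hK2 : K ≤ 2)
    (hgeo : ∀ k ℓ : ℕ, k ≤ ℓ → ε ℓ / ε k ≤ K * (1 - K⁻¹) ^ (ℓ - k)) (j : ℕ) :
    ∑' ℓ, ENNReal.ofReal (ε (j + ℓ) / ε j) ≤ 3 := by
  rw [tsum_eq_zero_add' ENNReal.summable, add_zero, div_self (hpos j).ne', ENNReal.ofReal_one]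
  have hrest : ∑' ℓ, ENNReal.ofReal (ε (j + (ℓ + 1)) / ε j) ≤ 2 := by
    simp only [add_comm _ 1, ← add_assoc]
    refine (tsum_ofReal_div_le_sq_mul_pow hK1 hgeo (Nat.le_add_left j 1)).trans ?_
    rw [Nat.add_sub_cancel, pow_one, ← ENNReal.ofReal_ofNat]
    refine ENNReal.ofReal_le_ofReal ?_
    have : K ^ 2 * (1 - K⁻¹) = K * (K - 1) := by field_simp
    nlinarith
  calc 1 + ∑' ℓ, ENNReal.ofReal (ε (j + (ℓ + 1)) / ε j) ≤ 1 + 2 := by gcongr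
    _ = 3 := by norm_num

end Ratios

noncomputable def errorWeight (δ : ℕ → ℝ≥0∞) (ρ : ℝ) (ε : ℕ → ℝ) (m : ℕ) : ℝ≥0∞ :=
  max (∑ j ∈ range (m + 1), ENNReal.ofReal (ε m / ε j) * ∑' k : ℕ, δ (j + k))
    (∑ j ∈ range (m + 1), ENNReal.ofReal (ε m / ε j) *
      ∑' k : ℕ, ((k + 1 : ℕ) : ℝ≥0∞) ^ (ρ / 2) * δ (k + 1 + m))

section ErrorWeight

variable {δ : ℕ → ℝ≥0∞} {ρ : ℝ} {ε : ℕ → ℝ} {K : ℝ}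

theorem errorWeight_le (hpos : ∀ j, 0 < ε j)
    (hpartial : ∀ k : ℕ, ∑ j ∈ range (k + 1), ε k / ε j ≤ 3) (m : ℕ) :
    errorWeight δ ρ ε m ≤
      ∑ j ∈ range (m + 1), ENNReal.ofReal (ε m / ε j) * ∑' k, δ (j + k) +
        3 * ∑' k : ℕ, ((k + 1 : ℕ) : ℝ≥0∞) ^ (ρ / 2) * δ (k + 1 + m) := by
  refine max_le le_self_add (le_add_left ?_)
  rw [← sum_mul, ← ENNReal.ofReal_sum_of_nonneg fun j _ => (div_pos (hpos m) (hpos j)).le,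
    ← ENNReal.ofReal_ofNat]
  exact mul_le_mul_left (ENNReal.ofReal_le_ofReal (hpartial m)) _

theorem tsum_sum_ofReal_div_mul_tails_le (hpos : ∀ j, 0 < ε j) (hK1 : 1 < K) (hK2 : K ≤ 2)
    (hgeo : ∀ k ℓ : ℕ, k ≤ ℓ → ε ℓ / ε k ≤ K * (1 - K⁻¹) ^ (ℓ - k)) (hρ : 0 ≤ ρ) {m : ℕ}
    (hm : 0 < m) :
    ∑' ℓ, ∑ j ∈ range (m + ℓ + 1), ENNReal.ofReal (ε (m + ℓ) / ε j) * ∑' k, δ (j + k) ≤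
      ENNReal.ofReal (8 / m) * (∑' k, δ k + ∑' k, k * δ k) +
        3 * (ENNReal.ofReal ((m : ℝ) ^ (-(ρ / 2))) * ∑' k : ℕ, (k : ℝ≥0∞) ^ (1 + ρ) * δ k) := by
  have hq0 : 0 ≤ 1 - K⁻¹ := sub_nonneg.2 (inv_le_one_of_one_le₀ hK1.le)
  have hq : 1 - K⁻¹ ≤ 1 / 2 := by
    have : 1 / 2 ≤ K⁻¹ := by rw [one_div]; exact inv_anti₀ (by positivity) hK2
    linarith
  rw [ENNReal.tsum_sum_range_add_eq (fun ℓ j => ENNReal.ofReal (ε ℓ / ε j) * ∑' k, δ (j + k))]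
  simp only [ENNReal.tsum_mul_right]
  gcongr ?_ + ?_
  · calc ∑ j ∈ range m, (∑' ℓ, ENNReal.ofReal (ε (m + ℓ) / ε j)) * ∑' k, δ (j + k)
        ≤ ∑ j ∈ range m, ENNReal.ofReal (4 * (1 - K⁻¹) ^ (m - j)) * ∑' k, δ (j + k) := by
          gcongr with j hj
          exact tsum_ofReal_div_le_four_mul_pow hK1 hK2 hgeo (mem_range.1 hj).le
      _ = 4 * ∑ j ∈ range m, ENNReal.ofReal ((1 - K⁻¹) ^ (m - j)) * ∑' k, δ (j + k) := by
          simp only [mul_sum, ENNReal.ofReal_mul zero_le_four, ENNReal.ofReal_ofNat, mul_assoc]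
      _ ≤ 4 * (ENNReal.ofReal (2 / m) * (∑' k, δ k + ∑' k, k * δ k)) :=
          mul_le_mul_right (ENNReal.sum_ofReal_pow_sub_mul_tsum_add_le δ hq0 hq hm) _
      _ = ENNReal.ofReal (8 / m) * (∑' k, δ k + ∑' k, k * δ k) := by
          rw [← mul_assoc, ← ENNReal.ofReal_ofNat, ← ENNReal.ofReal_mul (by norm_num)]
          ring_nf
  · calc ∑' i, (∑' ℓ, ENNReal.ofReal (ε (m + i + ℓ) / ε (m + i))) * ∑' k, δ (m + i + k)
        ≤ ∑' i, 3 * ∑' k, δ (m + i + k) := by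
          gcongr with i
          exact tsum_ofReal_div_self_le_three hpos hK1 hK2 hgeo _
      _ ≤ _ := by
          rw [ENNReal.tsum_mul_left]
          exact mul_le_mul_right (ENNReal.tsum_tails_add_le δ hρ hm) _

theorem tsum_errorWeight_le (hpos : ∀ j, 0 < ε j) (hK1 : 1 < K) (hK2 : K ≤ 2)
    (hgeo : ∀ k ℓ : ℕ, k ≤ ℓ → ε ℓ / ε k ≤ K * (1 - K⁻¹) ^ (ℓ - k))
    (hpartial : ∀ k : ℕ, ∑ j ∈ range (k + 1), ε k / ε j ≤ 3) (hρ : 0 ≤ ρ) {m : ℕ}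
    (hm : 0 < m) :
    ∑' ℓ, errorWeight δ ρ ε (m + ℓ) ≤
      ENNReal.ofReal (8 / m) * (∑' k, δ k + ∑' k, k * δ k) +
        ENNReal.ofReal (6 * (m : ℝ) ^ (-(ρ / 2))) * ∑' k : ℕ, (k : ℝ≥0∞) ^ (1 + ρ) * δ k := by
  set D := ∑' k : ℕ, (k : ℝ≥0∞) ^ (1 + ρ) * δ k
  set c := ENNReal.ofReal ((m : ℝ) ^ (-(ρ / 2)))
  calc ∑' ℓ, errorWeight δ ρ ε (m + ℓ)
      ≤ ∑' ℓ, (∑ j ∈ range (m + ℓ + 1), ENNReal.ofReal (ε (m + ℓ) / ε j) * ∑' k, δ (j + k) +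
          3 * ∑' k : ℕ, ((k + 1 : ℕ) : ℝ≥0∞) ^ (ρ / 2) * δ (k + 1 + (m + ℓ))) :=
        ENNReal.tsum_le_tsum fun ℓ => errorWeight_le hpos hpartial (m + ℓ)
    _ ≤ ENNReal.ofReal (8 / m) * (∑' k, δ k + ∑' k, k * δ k) + 3 * (c * D) + 3 * (c * D) := by
        rw [ENNReal.tsum_add, ENNReal.tsum_mul_left]
        gcongr
        · exact tsum_sum_ofReal_div_mul_tails_le hpos hK1 hK2 hgeo hρ hm
        · exact ENNReal.tsum_tsum_rpow_mul_add_le δ hρ hm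
    _ = _ := by
        rw [add_assoc, ← two_mul, ← mul_assoc, ← mul_assoc, show (2 : ℝ≥0∞) * 3 = 6 by norm_num,
          ← ENNReal.ofReal_ofNat 6, ← ENNReal.ofReal_mul (by norm_num)]

end ErrorWeight

theorem ENNReal.tsum_natCast_mul_le_tsum_rpow_mul (f : ℕ → ℝ≥0∞) {p : ℝ} (hp : 1 ≤ p) :
    ∑' k : ℕ, (k : ℝ≥0∞) * f k ≤ ∑' k : ℕ, (k : ℝ≥0∞) ^ p * f k :=
  ENNReal.tsum_le_tsum fun k => by
    refine mul_le_mul_left ?_ (f k)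
    rcases k.eq_zero_or_pos with rfl | hk
    · simp
    · exact ENNReal.le_rpow_self_of_one_le (by exact_mod_cast hk) hp

theorem ENNReal.tendsto_ofReal_mul_add_ofReal_mul {α : Type*} {l : Filter α} {a b : α → ℝ}
    (ha : Tendsto a l (𝓝 0)) (hb : Tendsto b l (𝓝 0)) {x y : ℝ≥0∞} (hx : x ≠ ∞) (hy : y ≠ ∞) :
    Tendsto (fun n => ENNReal.ofReal (a n) * x + ENNReal.ofReal (b n) * y) l (𝓝 0) := by
  simpa using (ENNReal.Tendsto.mul_const (ENNReal.tendsto_ofReal ha) (Or.inr hx)).add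
    (ENNReal.Tendsto.mul_const (ENNReal.tendsto_ofReal hb) (Or.inr hy))

theorem stmt_13_general (δ : ℕ → ℝ≥0∞) (ρ : ℝ) (hρ : 0 < ρ)
    (h0 : ∑' k : ℕ, δ k < ∞)
    (hρfin : ∑' k : ℕ, (k : ℝ≥0∞) ^ (1 + ρ) * δ k < ∞)
    (ε : ℕ → ℝ) (hpos : ∀ j, 0 < ε j)
    (K : ℝ) (hK1 : 1 < K) (hK2 : K ≤ 2)
    (hgeo : ∀ k ℓ : ℕ, k ≤ ℓ → ε ℓ / ε k ≤ K * (1 - K⁻¹) ^ (ℓ - k))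
    (hpartial : ∀ k : ℕ, ∑ j ∈ Finset.range (k + 1), ε k / ε j ≤ 3)
    (M : ℕ → ℝ≥0∞)
    (hM : ∀ m : ℕ, M m =
      max (∑ j ∈ Finset.range (m + 1),
            ENNReal.ofReal (ε m / ε j) * ∑' k : ℕ, δ (j + k))
          (∑ j ∈ Finset.range (m + 1),
            ENNReal.ofReal (ε m / ε j) *
              ∑' k : ℕ, ((k + 1 : ℕ) : ℝ≥0∞) ^ (ρ / 2) * δ (k + 1 + m))) :
    (∀ m : ℕ, 1 ≤ m →
      ∑' ℓ : ℕ, M (m + ℓ) ≤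
        ENNReal.ofReal (27 * max ((m : ℝ)⁻¹) ((1 - K⁻¹) ^ (m - 1))) *
            ((∑' k : ℕ, δ k) + ∑' k : ℕ, (k : ℝ≥0∞) * δ k) +
          ENNReal.ofReal (6 * (m : ℝ) ^ (-(ρ / 2))) *
            ∑' k : ℕ, (k : ℝ≥0∞) ^ (1 + ρ) * δ k) ∧
    ∀ T : ℝ, 0 < T → ∃ m₀ : ℕ,
      ENNReal.ofReal T * ∑' ℓ : ℕ, M (m₀ + ℓ) ≤ 1 := by
  obtain rfl : M = errorWeight δ ρ ε := funext hM
  have hq0 : 0 ≤ 1 - K⁻¹ := sub_nonneg.2 (inv_le_one_of_one_le₀ hK1.le)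
  have hq1 : 1 - K⁻¹ < 1 := sub_lt_self _ (inv_pos.2 (one_pos.trans hK1))
  have hbound : ∀ m : ℕ, 1 ≤ m → ∑' ℓ, errorWeight δ ρ ε (m + ℓ) ≤
      ENNReal.ofReal (27 * max ((m : ℝ)⁻¹) ((1 - K⁻¹) ^ (m - 1))) *
          ((∑' k : ℕ, δ k) + ∑' k : ℕ, (k : ℝ≥0∞) * δ k) +
        ENNReal.ofReal (6 * (m : ℝ) ^ (-(ρ / 2))) * ∑' k : ℕ, (k : ℝ≥0∞) ^ (1 + ρ) * δ k := by
    intro m hm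
    refine (tsum_errorWeight_le hpos hK1 hK2 hgeo hpartial hρ.le hm).trans ?_
    gcongr
    have : 0 < (m : ℝ)⁻¹ := inv_pos.2 (by exact_mod_cast hm)
    rw [div_eq_mul_inv]
    nlinarith [le_max_left ((m : ℝ)⁻¹) ((1 - K⁻¹) ^ (m - 1))]
  refine ⟨hbound, fun T _ => ?_⟩
  have hmax : Tendsto (fun m : ℕ => 27 * max ((m : ℝ)⁻¹) ((1 - K⁻¹) ^ (m - 1))) atTop (𝓝 0) := by
    simpa using ((tendsto_inv_atTop_zero.comp tendsto_natCast_atTop_atTop).max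
      ((tendsto_pow_atTop_nhds_zero_of_lt_one hq0 hq1).comp (tendsto_sub_atTop_nat 1))).const_mul 27
  have hrpow : Tendsto (fun m : ℕ => 6 * (m : ℝ) ^ (-(ρ / 2))) atTop (𝓝 0) := by
    simpa using
      ((tendsto_rpow_neg_atTop (by linarith)).comp tendsto_natCast_atTop_atTop).const_mul 6
  have hD1 := (ENNReal.tsum_natCast_mul_le_tsum_rpow_mul δ (by linarith : 1 ≤ 1 + ρ)).trans_lt hρfin
  have hlim := ENNReal.Tendsto.const_mul (ENNReal.tendsto_ofReal_mul_add_ofReal_mul hmax hrpow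
    (ENNReal.add_ne_top.2 ⟨h0.ne, hD1.ne⟩) hρfin.ne) (Or.inr (ENNReal.ofReal_ne_top (r := T)))
  rw [mul_zero] at hlim
  obtain ⟨m₀, hm₀, hsmall⟩ :=
    ((eventually_ge_atTop 1).and (hlim.eventually (ge_mem_nhds zero_lt_one))).exists
  exact ⟨m₀, (mul_le_mul_right (hbound m₀ hm₀) _).trans hsmall⟩

/-- Lemma 4.4: summability of the per-scale error weights `M_m`. With
`M_m = max{ ∑_{j=0}^m (ε_m/ε_j) ∑_{k=j}^∞ δ_k , ∑_{j=0}^m (ε_m/ε_j) ∑_{k=1}^∞ k^{ρ/2} δ_{k+m} }`,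
one has `∑_{ℓ=m}^∞ M_ℓ ≤ 27([δ]₀+[δ]₁) max{m⁻¹,(1-K⁻¹)^{m-1}} + 6 m^{-ρ/2} [δ]_{1+ρ}`,
and consequently for every `T > 0` there is `m₀` with `T ∑_{ℓ=m₀}^∞ M_ℓ ≤ 1`. -/
theorem stmt_13 (δ : ℕ → ℝ≥0∞) (ρ : ℝ) (hρ : 0 < ρ)
    (h0 : ∑' k : ℕ, δ k < ∞)
    (hρfin : ∑' k : ℕ, (k : ℝ≥0∞) ^ (1 + ρ) * δ k < ∞)
    (ε : ℕ → ℝ) (hpos : ∀ j, 0 < ε j) (hdec : Antitone ε) (hε0 : ε 0 = 1)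
    (K : ℝ) (hK1 : 1 < K) (hK2 : K ≤ 2)
    (hgeo : ∀ k ℓ : ℕ, k ≤ ℓ → ε ℓ / ε k ≤ K * (1 - K⁻¹) ^ (ℓ - k))
    (hpartial : ∀ k : ℕ, ∑ j ∈ Finset.range (k + 1), ε k / ε j ≤ 3)
    (M : ℕ → ℝ≥0∞)
    (hM : ∀ m : ℕ, M m =
      max (∑ j ∈ Finset.range (m + 1),
            ENNReal.ofReal (ε m / ε j) * ∑' k : ℕ, δ (j + k))
          (∑ j ∈ Finset.range (m + 1),
            ENNReal.ofReal (ε m / ε j) *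
              ∑' k : ℕ, ((k + 1 : ℕ) : ℝ≥0∞) ^ (ρ / 2) * δ (k + 1 + m))) :
    (∀ m : ℕ, 1 ≤ m →
      ∑' ℓ : ℕ, M (m + ℓ) ≤
        ENNReal.ofReal (27 * max ((m : ℝ)⁻¹) ((1 - K⁻¹) ^ (m - 1))) *
            ((∑' k : ℕ, δ k) + ∑' k : ℕ, (k : ℝ≥0∞) * δ k) +
          ENNReal.ofReal (6 * (m : ℝ) ^ (-(ρ / 2))) *
            ∑' k : ℕ, (k : ℝ≥0∞) ^ (1 + ρ) * δ k) ∧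
    ∀ T : ℝ, 0 < T → ∃ m₀ : ℕ,
      ENNReal.ofReal T * ∑' ℓ : ℕ, M (m₀ + ℓ) ≤ 1 :=
  stmt_13_general δ ρ hρ h0 hρfin ε hpos K hK1 hK2 hgeo hpartial M hM
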